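/- Let G=(V,E) be a finite connected graph, f_v : ℝ → ℝ convex for each v ∈ V, F(x) = Σ_v f_v(x(v)) for x ∈ ℝ^V, and λ > 0. For x* ∈ ℝ, the following are equivalent: (1) x*·1_V minimizes F(x) + λ‖x‖_TV over ℝ^V; (2) there exists u ∈ ∂F(x*·1_V) with ‖u‖_* ≤ λ; (3) there exists u with u(v) ∈ ∂f_v(x*) for all v, Σ_v u(v) = 0, and Σ_{v∈A} u(v) ≤ λ·per(A) for every A ⊆ V. Moreover each of these implies that x* minimizes Σ_v f_v over ℝ. -/

import Mathlib

/-!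
The common pivot is the domination condition `⟨x, u⟩ ≤ λ‖x‖_TV` for all `x`. Since `F` is
separable, vectors of pointwise subgradients of the `f_v` at `x*` are exactly the subgradients of
`F` at `x*·1`. If such a `u` is dominated by `λ‖·‖_TV`, the subgradient inequality gives
minimality; conversely, at a minimizer the concave function `F(x*·1) − λ‖·‖_TV` lies below `F`
and touches it at `x*·1`, so a Hahn–Banach separation yields a linear functional `u` between
them. Domination is equivalent to `∑ u = 0` plus the perimeter inequalities by a discrete coarea
argument (peel off one level set at a time). On a connected graph every nontrivial cut has
perimeter at least `1/2`, so the dual norm is finite and domination is also equivalent to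
`∑ u = 0` plus `‖u‖_* ≤ λ`.
-/
open Finset

noncomputable section

/-- Discrete total variation. -/
def tvNorm {V : Type*} [Fintype V] (G : SimpleGraph V) [DecidableRel G.Adj]
    (x : V → ℝ) : ℝ :=
  (1 / 2) * ∑ v, ∑ w, if G.Adj v w then |x w - x v| else 0

/-- Perimeter of a subset of vertices. -/
def perim {V : Type*} [Fintype V] [DecidableEq V] (G : SimpleGraph V)
    [DecidableRel G.Adj] (A : Finset V) : ℝ :=
  tvNorm G (fun v => if v ∈ A then 1 else 0)

/-- Dual norm of the TV norm on the zero-mean subspace. -/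
def dualNorm {V : Type*} [Fintype V] (G : SimpleGraph V) [DecidableRel G.Adj]
    (u : V → ℝ) : ℝ :=
  sSup {r | ∃ x : V → ℝ, (∑ v, x v = 0) ∧ tvNorm G x ≤ 1 ∧ r = ∑ v, x v * u v}

/-- `g` is a subgradient of `f : ℝ → ℝ` at `x`. -/
def IsSubgradientAt (f : ℝ → ℝ) (x g : ℝ) : Prop :=
  ∀ y : ℝ, f x + g * (y - x) ≤ f y

open scoped Matrix

theorem const_dotProduct {V : Type*} [Fintype V] (c : ℝ) (u : V → ℝ) :
    (fun _ => c) ⬝ᵥ u = c * ∑ v, u v := by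
  simp [dotProduct, mul_sum]

section TotalVariation

variable {V : Type*} [Fintype V] (G : SimpleGraph V) [DecidableRel G.Adj]

theorem tvNorm_nonneg (x : V → ℝ) : 0 ≤ tvNorm G x := by
  unfold tvNorm
  refine mul_nonneg (by norm_num) (sum_nonneg fun v _ => sum_nonneg fun w _ => ?_)
  split_ifs <;> positivity

theorem tvNorm_const (c : ℝ) : tvNorm G (fun _ => c) = 0 := by
  simp [tvNorm]

theorem tvNorm_neg (x : V → ℝ) : tvNorm G (-x) = tvNorm G x := by
  simp [tvNorm, neg_add_eq_sub, abs_sub_comm]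

theorem tvNorm_smul {c : ℝ} (hc : 0 ≤ c) (x : V → ℝ) : tvNorm G (c • x) = c * tvNorm G x := by
  simp only [tvNorm, mul_left_comm c, mul_sum, mul_ite, mul_zero, Pi.smul_apply, smul_eq_mul,
    ← mul_sub, abs_mul, abs_of_nonneg hc]

theorem tvNorm_add_le (x y : V → ℝ) : tvNorm G (x + y) ≤ tvNorm G x + tvNorm G y := by
  simp only [tvNorm, ← mul_add, ← sum_add_distrib]
  gcongr with v _ w _
  split_ifs
  · simpa [add_sub_add_comm] using abs_add_le (x w - x v) (y w - y v)
  · simp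

theorem tvNorm_add_of_comonotone {x y : V → ℝ}
    (h : ∀ v w, G.Adj v w → 0 ≤ (x w - x v) * (y w - y v)) :
    tvNorm G (x + y) = tvNorm G x + tvNorm G y := by
  simp only [tvNorm, ← mul_add, ← sum_add_distrib]
  congr 1
  refine sum_congr rfl fun v _ => sum_congr rfl fun w _ => ?_
  split_ifs with hvw
  · rw [Pi.add_apply, Pi.add_apply, add_sub_add_comm,
      (abs_add_eq_add_abs_iff _ _).2 (mul_nonneg_iff.1 (h v w hvw))]
  · simp

theorem tvNorm_add_const (x : V → ℝ) (c : ℝ) : tvNorm G (x + fun _ => c) = tvNorm G x := by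
  rw [tvNorm_add_of_comonotone G fun v w _ => by simp, tvNorm_const, add_zero]

theorem convexOn_tvNorm : ConvexOn ℝ Set.univ (tvNorm G) :=
  ⟨convex_univ, fun x _ y _ a b ha hb _ => by
    simpa only [tvNorm_smul G ha, tvNorm_smul G hb, smul_eq_mul] using
      tvNorm_add_le G (a • x) (b • y)⟩

theorem abs_sub_le_two_mul_tvNorm (x : V → ℝ) {v w : V} (hvw : G.Adj v w) :
    |x w - x v| ≤ 2 * tvNorm G x := by
  have hnonneg : ∀ a b, 0 ≤ if G.Adj a b then |x b - x a| else 0 := fun a b => by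
    split_ifs <;> positivity
  calc |x w - x v| = if G.Adj v w then |x w - x v| else 0 := (if_pos hvw).symm
    _ ≤ ∑ b, if G.Adj v b then |x b - x v| else 0 :=
        single_le_sum (fun b _ => hnonneg v b) (mem_univ w)
    _ ≤ ∑ a, ∑ b, if G.Adj a b then |x b - x a| else 0 :=
        single_le_sum (f := fun a => ∑ b, if G.Adj a b then |x b - x a| else 0)
          (fun a _ => sum_nonneg fun b _ => hnonneg a b) (mem_univ v)
    _ = 2 * tvNorm G x := by rw [tvNorm]; ring

end TotalVariation

section Perimeter

variable {V : Type*} [Fintype V] [DecidableEq V] (G : SimpleGraph V) [DecidableRel G.Adj]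

theorem indicator_dotProduct (A : Finset V) (u : V → ℝ) :
    (fun v => if v ∈ A then (1 : ℝ) else 0) ⬝ᵥ u = ∑ v ∈ A, u v := by
  simp [dotProduct, sum_ite_mem]

theorem one_le_two_mul_perim (hG : G.Connected) {A : Finset V} {a b : V} (ha : a ∈ A)
    (hb : b ∉ A) : 1 ≤ 2 * perim G A := by
  obtain ⟨d, -, hd, hd'⟩ := (hG.preconnected a b).some.exists_boundary_dart (A : Set V) ha hb
  simpa [perim, mem_coe.1 hd, mem_coe.not.1 hd'] using
    abs_sub_le_two_mul_tvNorm G (fun v => if v ∈ A then (1 : ℝ) else 0) d.adj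

/-- Discrete coarea estimate, by induction on the support: subtracting the least positive value
`t` on the support `S` leaves a nonnegative vector comonotone with `t • 1_S`. -/
theorem dotProduct_le_mul_tvNorm_of_nonneg {u : V → ℝ} {μ : ℝ}
    (hper : ∀ A : Finset V, ∑ v ∈ A, u v ≤ μ * perim G A) {x : V → ℝ} (hx : 0 ≤ x) :
    x ⬝ᵥ u ≤ μ * tvNorm G x := by
  induction hn : #{v | 0 < x v} using Nat.strong_induction_on generalizing x with
  | _ n ih =>
  set S : Finset V := {v | 0 < x v}
  rcases S.eq_empty_or_nonempty with hS0 | hSne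
  · have hx0 : x = fun _ => 0 := funext fun v =>
      le_antisymm (not_lt.1 (filter_eq_empty_iff.1 hS0 (mem_univ v))) (hx v)
    simp [hx0, tvNorm_const]
  obtain ⟨w, hwS, hwmin⟩ := S.exists_min_image x hSne
  set t := x w
  have ht : 0 < t := by simpa [S] using hwS
  set y : V → ℝ := fun v => if v ∈ S then x v - t else 0
  set χ : V → ℝ := fun v => if v ∈ S then 1 else 0
  have hxy : x = y + t • χ := funext fun v => by
    by_cases hv : v ∈ S
    · simp [y, χ, hv]
    · have hxv : x v = 0 := le_antisymm (not_lt.1 (by simpa [S] using hv)) (hx v)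
      simp [y, χ, hv, hxv]
  have hy : 0 ≤ y := fun v => by
    by_cases hv : v ∈ S <;> simp [y, hv, hwmin v]
  have hyS : #{v | 0 < y v} < n := by
    rw [← hn]
    refine card_lt_card ((ssubset_iff_of_subset fun v hv => ?_).2 ⟨w, hwS, by simp [y, t, hwS]⟩)
    by_contra hvS
    simp [y, hvS] at hv
  have hcomono : ∀ a b, G.Adj a b → 0 ≤ (y b - y a) * ((t • χ) b - (t • χ) a) := by
    intro a b _
    by_cases ha : a ∈ S <;> by_cases hb : b ∈ S
    · simp [y, χ, ha, hb]
    · simp only [y, χ, ha, hb, if_true, if_false, Pi.smul_apply, smul_eq_mul]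
      nlinarith [hwmin a ha]
    · simp only [y, χ, ha, hb, if_true, if_false, Pi.smul_apply, smul_eq_mul]
      nlinarith [hwmin b hb]
    · simp [y, χ, ha, hb]
  have htv : tvNorm G x = tvNorm G y + t * perim G S := by
    rw [hxy, tvNorm_add_of_comonotone G hcomono, tvNorm_smul G ht.le]
    rfl
  calc x ⬝ᵥ u = y ⬝ᵥ u + t * ∑ v ∈ S, u v := by
        rw [hxy, add_dotProduct, smul_dotProduct, indicator_dotProduct, smul_eq_mul]
    _ ≤ μ * tvNorm G y + t * (μ * perim G S) :=
        add_le_add (ih _ hyS hy rfl) (mul_le_mul_of_nonneg_left (hper S) ht.le)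
    _ = μ * tvNorm G x := by rw [htv]; ring

theorem dotProduct_le_mul_tvNorm {u : V → ℝ} {μ : ℝ} (hu : ∑ v, u v = 0)
    (hper : ∀ A : Finset V, ∑ v ∈ A, u v ≤ μ * perim G A) (x : V → ℝ) :
    x ⬝ᵥ u ≤ μ * tvNorm G x := by
  have hshift : 0 ≤ x + fun _ => ∑ v, |x v| := fun v => by
    have := single_le_sum (f := fun v => |x v|) (fun v _ => abs_nonneg _) (mem_univ v)
    simp only [Pi.add_apply, Pi.zero_apply]
    linarith [neg_abs_le (x v)]
  simpa [add_dotProduct, const_dotProduct, hu, tvNorm_add_const] using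
    dotProduct_le_mul_tvNorm_of_nonneg G hper hshift

theorem forall_dotProduct_le_mul_tvNorm_iff {u : V → ℝ} {μ : ℝ} :
    (∀ x, x ⬝ᵥ u ≤ μ * tvNorm G x) ↔
      ∑ v, u v = 0 ∧ ∀ A : Finset V, ∑ v ∈ A, u v ≤ μ * perim G A := by
  refine ⟨fun h => ⟨le_antisymm ?_ ?_, fun A => ?_⟩,
    fun ⟨hu, hper⟩ => dotProduct_le_mul_tvNorm G hu hper⟩
  · simpa [dotProduct, tvNorm_const] using h fun _ => 1
  · simpa [dotProduct, tvNorm_const] using h fun _ => -1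
  · simpa [indicator_dotProduct, perim] using h fun v => if v ∈ A then 1 else 0

end Perimeter

section DualNorm

variable {V : Type*} [Fintype V] [DecidableEq V] {G : SimpleGraph V} [DecidableRel G.Adj]

theorem dotProduct_le_two_mul_sum_abs_mul_tvNorm (hG : G.Connected) {u : V → ℝ}
    (hu : ∑ v, u v = 0) (x : V → ℝ) : x ⬝ᵥ u ≤ (2 * ∑ v, |u v|) * tvNorm G x := by
  refine dotProduct_le_mul_tvNorm G hu (fun A => ?_) x
  by_cases hA : ∃ a ∈ A, ∃ b, b ∉ A
  · obtain ⟨a, ha, b, hb⟩ := hA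
    calc ∑ v ∈ A, u v ≤ ∑ v, |u v| :=
          (sum_le_sum fun v _ => le_abs_self _).trans
            (sum_le_sum_of_subset_of_nonneg (subset_univ A) fun _ _ _ => abs_nonneg _)
      _ ≤ (∑ v, |u v|) * (2 * perim G A) :=
          le_mul_of_one_le_right (by positivity) (one_le_two_mul_perim G hG ha hb)
      _ = _ := by ring
  · have hA0 : ∑ v ∈ A, u v = 0 := by
      push Not at hA
      rcases A.eq_empty_or_nonempty with rfl | ⟨a, ha⟩
      · exact sum_empty
      · rwa [eq_univ_of_forall (hA a ha)]
    rw [hA0]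
    exact mul_nonneg (by positivity) (tvNorm_nonneg G _)

theorem dotProduct_le_dualNorm_mul_tvNorm (hG : G.Connected) {u : V → ℝ} (hu : ∑ v, u v = 0)
    (x : V → ℝ) : x ⬝ᵥ u ≤ dualNorm G u * tvNorm G x := by
  rcases isEmpty_or_nonempty V with hV | hV
  · simp [dotProduct, tvNorm]
  set x₀ : V → ℝ := x + fun _ => -((∑ v, x v) / Fintype.card V)
  have hx₀ : ∑ v, x₀ v = 0 := by
    have : (Fintype.card V : ℝ) ≠ 0 := by positivity
    simp [x₀, sum_add_distrib, mul_div_cancel₀ _ this]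
  have hdot : x₀ ⬝ᵥ u = x ⬝ᵥ u := by simp [x₀, add_dotProduct, const_dotProduct, hu]
  have htv : tvNorm G x₀ = tvNorm G x := tvNorm_add_const G x _
  rw [← hdot, ← htv]
  rcases (tvNorm_nonneg G x₀).eq_or_lt with h0 | hpos
  · simpa [← h0] using dotProduct_le_two_mul_sum_abs_mul_tvNorm hG hu x₀
  -- Connectivity bounds the set defining `dualNorm`, whose `sSup` would otherwise be junk.
  have hbdd : BddAbove {r | ∃ y : V → ℝ, (∑ v, y v = 0) ∧ tvNorm G y ≤ 1 ∧
      r = ∑ v, y v * u v} := by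
    refine ⟨2 * ∑ v, |u v|, ?_⟩
    rintro r ⟨y, -, hy, rfl⟩
    exact (dotProduct_le_two_mul_sum_abs_mul_tvNorm hG hu y).trans
      (mul_le_of_le_one_right (by positivity) hy)
  have hmem : (tvNorm G x₀)⁻¹ * x₀ ⬝ᵥ u ∈ {r | ∃ y : V → ℝ, (∑ v, y v = 0) ∧
      tvNorm G y ≤ 1 ∧ r = ∑ v, y v * u v} := by
    refine ⟨(tvNorm G x₀)⁻¹ • x₀, ?_, ?_, ?_⟩
    · simp [← mul_sum, hx₀]
    · rw [tvNorm_smul G (inv_nonneg.2 hpos.le), inv_mul_cancel₀ hpos.ne']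
    · simp [mul_assoc, dotProduct, mul_sum]
  have := le_csSup hbdd hmem
  rwa [inv_mul_le_iff₀ hpos, mul_comm] at this

theorem sum_eq_zero_and_dualNorm_le_iff (hG : G.Connected) {u : V → ℝ} {μ : ℝ} (hμ : 0 ≤ μ) :
    (∑ v, u v = 0 ∧ dualNorm G u ≤ μ) ↔ ∀ x, x ⬝ᵥ u ≤ μ * tvNorm G x := by
  refine ⟨fun ⟨hu, hd⟩ x => (dotProduct_le_dualNorm_mul_tvNorm hG hu x).trans
      (mul_le_mul_of_nonneg_right hd (tvNorm_nonneg G x)),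
    fun h => ⟨((forall_dotProduct_le_mul_tvNorm_iff G).1 h).1, Real.sSup_le ?_ hμ⟩⟩
  rintro r ⟨x, -, hx, rfl⟩
  exact (h x).trans (mul_le_of_le_one_right hμ hx)

end DualNorm

/-- Separate the strict epigraph of `f` from the hypograph of `g`; since the two sets touch over
`x₀`, the separating functional has a nonzero vertical part and can be normalized. -/
theorem exists_continuousLinearMap_between {E : Type*} [TopologicalSpace E] [AddCommGroup E]
    [Module ℝ E] [IsTopologicalAddGroup E] [ContinuousSMul ℝ E] {f g : E → ℝ}
    (hf : ConvexOn ℝ Set.univ f) (hfc : Continuous f) (hg : ConcaveOn ℝ Set.univ g)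
    (hgf : ∀ x, g x ≤ f x) {x₀ : E} (hx₀ : f x₀ ≤ g x₀) :
    ∃ L : E →L[ℝ] ℝ, ∀ x, g x - g x₀ ≤ L (x - x₀) ∧ L (x - x₀) ≤ f x - f x₀ := by
  have hopen : IsOpen {p : E × ℝ | p.1 ∈ Set.univ ∧ f p.1 < p.2} := by
    simpa using isOpen_lt (hfc.comp continuous_fst) continuous_snd
  have hdisj : Disjoint {p : E × ℝ | p.1 ∈ Set.univ ∧ f p.1 < p.2}
      {p | p.1 ∈ Set.univ ∧ p.2 ≤ g p.1} :=
    Set.disjoint_left.2 fun p hpS hpT => (hpS.2.trans_le (hpT.2.trans (hgf p.1))).false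
  obtain ⟨Φ, c, hΦf, hΦg⟩ :=
    geometric_hahn_banach_open hf.convex_strict_epigraph hopen hg.convex_hypograph hdisj
  set β := Φ (0, 1)
  set L := Φ.comp (ContinuousLinearMap.inl ℝ E ℝ)
  have hΦ : ∀ x r, Φ (x, r) = L x + r * β := fun x r => by
    rw [show (x, r) = (x, 0) + r • ((0 : E), (1 : ℝ)) by simp, map_add, map_smul, smul_eq_mul]
    rfl
  have hf_le : ∀ x, Φ (x, f x) ≤ c := fun x => by
    have hclosed : IsClosed {r : ℝ | Φ (x, r) ≤ c} :=
      isClosed_le (by fun_prop) continuous_const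
    have : Set.Ioi (f x) ⊆ {r | Φ (x, r) ≤ c} := fun r hr => (hΦf (x, r) ⟨trivial, hr⟩).le
    exact hclosed.closure_subset_iff.2 this (by rw [closure_Ioi]; exact Set.self_mem_Ici)
  have hg_ge : ∀ x, c ≤ Φ (x, g x) := fun x => hΦg (x, g x) ⟨trivial, le_rfl⟩
  have hfg : g x₀ = f x₀ := le_antisymm (hgf x₀) hx₀
  have hc : c = Φ (x₀, f x₀) := le_antisymm (hfg ▸ hg_ge x₀) (hf_le x₀)
  have hβ : β < 0 := by
    have := hΦf (x₀, f x₀ + 1) ⟨trivial, lt_add_one _⟩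
    linarith [hΦ x₀ (f x₀ + 1), hΦ x₀ (f x₀)]
  refine ⟨(-β)⁻¹ • L, fun x => ⟨?_, ?_⟩⟩
  all_goals rw [smul_apply, map_sub, smul_eq_mul]
  · rw [le_inv_mul_iff₀ (neg_pos.2 hβ), hfg]
    linarith [hg_ge x, hΦ x (g x), hΦ x₀ (f x₀)]
  · rw [inv_mul_le_iff₀ (neg_pos.2 hβ)]
    linarith [hf_le x, hΦ x (f x), hΦ x₀ (f x₀)]

theorem ConvexOn.finsetSum {ι E : Type*} [AddCommGroup E] [Module ℝ E] {s : Set E}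
    (hs : Convex ℝ s) {t : Finset ι} {f : ι → E → ℝ} (hf : ∀ i ∈ t, ConvexOn ℝ s (f i)) :
    ConvexOn ℝ s (∑ i ∈ t, f i) :=
  Finset.sum_induction _ (ConvexOn ℝ s) (fun _ _ => ConvexOn.add) (convexOn_const 0 hs) hf

theorem forall_isSubgradientAt_iff {V : Type*} [Fintype V] (f : V → ℝ → ℝ) (x : ℝ)
    (u : V → ℝ) : (∀ v, IsSubgradientAt (f v) x (u v)) ↔
      ∀ y : V → ℝ, ∑ v, f v x + (y - fun _ => x) ⬝ᵥ u ≤ ∑ v, f v (y v) := by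
  classical
  have key : ∀ y : V → ℝ, ∑ v, f v x + (y - fun _ => x) ⬝ᵥ u ≤ ∑ v, f v (y v) ↔
      0 ≤ ∑ v, (f v (y v) - (f v x + u v * (y v - x))) := fun y => by
    simp only [sum_sub_distrib, sum_add_distrib, dotProduct, Pi.sub_apply, mul_comm (u _)]
    constructor <;> intro h <;> linarith
  simp only [key]
  refine ⟨fun h y => sum_nonneg fun v _ => sub_nonneg.2 (h v (y v)), fun h v t => ?_⟩
  have := h (Function.update (fun _ => x) v t)
  rwa [sum_eq_single v (fun w _ hw => by simp [hw]) (by simp), Function.update_self,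
    sub_nonneg] at this

theorem forall_sum_le_sum_add_tvNorm_iff {V : Type*} [Fintype V] (G : SimpleGraph V)
    [DecidableRel G.Adj] {f : V → ℝ → ℝ} (hconv : ∀ v, ConvexOn ℝ Set.univ (f v)) {lam : ℝ}
    (hlam : 0 ≤ lam) (xstar : ℝ) :
    (∀ y : V → ℝ, ∑ v, f v xstar ≤ ∑ v, f v (y v) + lam * tvNorm G y) ↔
      ∃ u : V → ℝ, (∀ v, IsSubgradientAt (f v) xstar (u v)) ∧
        ∀ x, x ⬝ᵥ u ≤ lam * tvNorm G x := by
  classical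
  set x₀ : V → ℝ := fun _ => xstar
  have htv : ∀ x : V → ℝ, tvNorm G (x₀ - x) = tvNorm G x := fun x => by
    rw [sub_eq_neg_add, tvNorm_add_const, tvNorm_neg]
  simp only [forall_isSubgradientAt_iff]
  constructor
  · intro hmin
    set F : (V → ℝ) → ℝ := fun y => ∑ v, f v (y v)
    have hF : ConvexOn ℝ Set.univ F := by
      refine (ConvexOn.finsetSum convex_univ (t := univ) (f := fun v (y : V → ℝ) => f v (y v))
        fun v _ => ?_).congr fun y _ => by simp [F]
      simpa [Function.comp_def] using
        (hconv v).comp_linearMap (LinearMap.proj v : (V → ℝ) →ₗ[ℝ] ℝ)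
    have hg : ConcaveOn ℝ Set.univ fun y => F x₀ - lam * tvNorm G y :=
      ((convexOn_tvNorm G).smul hlam).neg.add_const (F x₀) |>.congr fun y _ => by
        simp only [Pi.add_apply, Pi.neg_apply]
        ring
    obtain ⟨L, hL⟩ := exists_continuousLinearMap_between hF
      (continuousOn_univ.1 (hF.continuousOn isOpen_univ)) hg
      (fun y => by linarith [hmin y]) (x₀ := x₀) (by simp [tvNorm_const, x₀])
    have hLu : ∀ d, L d = d ⬝ᵥ fun v => L (Pi.single v 1) := fun d => by
      conv_lhs => rw [show d = ∑ v, Pi.single v (d v) by ext; simp]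
      simp only [map_sum, dotProduct]
      refine sum_congr rfl fun v _ => ?_
      rw [← smul_eq_mul, ← map_smul, ← Pi.single_smul', smul_eq_mul, mul_one]
    refine ⟨fun v => L (Pi.single v 1), fun y => ?_, fun x => ?_⟩
    · linarith [hLu (y - x₀), (hL y).2]
    · have := (hL (x₀ - x)).1
      simp only [htv, sub_sub_cancel_left, map_neg, tvNorm_const, x₀] at this
      linarith [hLu x]
  · rintro ⟨u, hsub, hlin⟩ y
    have := hlin (x₀ - y)
    rw [htv, ← neg_sub, neg_dotProduct] at this
    linarith [hsub y]

/-- Characterization of consensus minimizers of the TV-regularized problem: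
`x* 1` minimizes `F + λ‖·‖_TV` iff some subgradient vector `u ∈ ∂F(x* 1)` is
zero-mean with `‖u‖_* ≤ λ` iff such a `u` satisfies `∑_A u ≤ λ per(A)` for all
`A ⊆ V`; and each of these implies that `x*` minimizes `∑_v f_v`. -/
theorem consensus_minimizer_characterization {V : Type*} [Fintype V] [DecidableEq V]
    (G : SimpleGraph V) [DecidableRel G.Adj] (hG : G.Connected)
    (f : V → ℝ → ℝ) (hconv : ∀ v, ConvexOn ℝ Set.univ (f v))
    (lam : ℝ) (hlam : 0 < lam) (xstar : ℝ) :
    ((∀ y : V → ℝ,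
        (∑ v, f v xstar) + lam * tvNorm G (fun _ => xstar)
          ≤ (∑ v, f v (y v)) + lam * tvNorm G y)
      ↔ (∃ u : V → ℝ, (∀ v, IsSubgradientAt (f v) xstar (u v)) ∧
          (∑ v, u v = 0) ∧ dualNorm G u ≤ lam))
    ∧
    ((∃ u : V → ℝ, (∀ v, IsSubgradientAt (f v) xstar (u v)) ∧
        (∑ v, u v = 0) ∧ dualNorm G u ≤ lam)
      ↔ (∃ u : V → ℝ, (∀ v, IsSubgradientAt (f v) xstar (u v)) ∧
          (∑ v, u v = 0) ∧ ∀ A : Finset V, (∑ v ∈ A, u v) ≤ lam * perim G A))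
    ∧
    ((∀ y : V → ℝ,
        (∑ v, f v xstar) + lam * tvNorm G (fun _ => xstar)
          ≤ (∑ v, f v (y v)) + lam * tvNorm G y)
      → ∀ y : ℝ, (∑ v, f v xstar) ≤ ∑ v, f v y) := by
  have hmin := forall_sum_le_sum_add_tvNorm_iff G hconv hlam.le xstar
  have hdual : ∀ u : V → ℝ, (∑ v, u v = 0 ∧ dualNorm G u ≤ lam) ↔
      ∀ x, x ⬝ᵥ u ≤ lam * tvNorm G x := fun u => sum_eq_zero_and_dualNorm_le_iff hG hlam.le
  have hper : ∀ u : V → ℝ, (∑ v, u v = 0 ∧ ∀ A : Finset V, ∑ v ∈ A, u v ≤ lam * perim G A) ↔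
      ∀ x, x ⬝ᵥ u ≤ lam * tvNorm G x := fun u => (forall_dotProduct_le_mul_tvNorm_iff G).symm
  simp only [tvNorm_const, mul_zero, add_zero, hdual, hper, iff_self, true_and]
  exact ⟨hmin, fun h y => by simpa [tvNorm_const] using h fun _ => y⟩
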